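/- Let k ≥ 1 and let 2 ≤ n ≤ m. Let ι : B_n → B_m be the group homomorphism defined on the presented group B_n by ι(σ_i) = σ_i for all 1 ≤ i ≤ n−1. Then ι maps Γ_k(P_n) into Γ_k(P_m), and the induced homomorphism ῑ : B_n/Γ_k(P_n) → B_m/Γ_k(P_m) is injective. -/

import Mathlib

namespace BraidProj

/-- The commutation relator `σᵢσⱼσᵢ⁻¹σⱼ⁻¹` in the free group. -/
def σrel1 {m : ℕ} (i j : Fin m) : FreeGroup (Fin m) :=
  .of i * .of j * (.of i)⁻¹ * (.of j)⁻¹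

/-- The braid relator `σᵢσⱼσᵢ(σⱼσᵢσⱼ)⁻¹` in the free group. -/
def σrel2 {m : ℕ} (i j : Fin m) : FreeGroup (Fin m) :=
  .of i * .of j * .of i * (.of j * .of i * .of j)⁻¹

/-- The braid relations for the Artin braid group on `n` strings:
generators `σ_1, …, σ_{n-1}` are indexed (0-based) by `Fin (n-1)`. -/
def braidRels (n : ℕ) : Set (FreeGroup (Fin (n - 1))) :=
  {r | (∃ i j : Fin (n - 1), (i : ℕ) + 2 ≤ (j : ℕ) ∧ r = σrel1 i j) ∨
       (∃ i j : Fin (n - 1), (i : ℕ) + 1 = (j : ℕ) ∧ r = σrel2 i j)}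

/-- The Artin braid group `B_n` on `n` strings, as a presented group. -/
abbrev B (n : ℕ) : Type := PresentedGroup (braidRels n)

/-- The `i`-th Artin generator (0-based), with junk value `1` if out of range. -/
def braidGen (n : ℕ) (i : ℕ) : B n :=
  if h : i < n - 1 then PresentedGroup.of ⟨i, h⟩ else 1

/-- The transposition `(i, i+1)` (0-based) in `S_n`, the image of the Artin
generator `σ` indexed by `i : Fin (n-1)`. -/
def permGen (n : ℕ) (i : Fin (n - 1)) : Equiv.Perm (Fin n) :=
  Equiv.swap ⟨(i : ℕ), by have := i.isLt; omega⟩ ⟨(i : ℕ) + 1, by have := i.isLt; omega⟩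

lemma swap_commute_of {α : Type*} [DecidableEq α] {a b c d : α}
    (hac : a ≠ c) (had : a ≠ d) (hbc : b ≠ c) (hbd : b ≠ d) :
    Commute (Equiv.swap a b) (Equiv.swap c d) := by
  apply Equiv.Perm.Disjoint.commute
  intro x
  by_cases hxa : x = a
  · subst hxa; right; exact Equiv.swap_apply_of_ne_of_ne hac had
  by_cases hxb : x = b
  · subst hxb; right; exact Equiv.swap_apply_of_ne_of_ne hbc hbd
  · left; exact Equiv.swap_apply_of_ne_of_ne hxa hxb

lemma swap_braid {α : Type*} [DecidableEq α] {a b c : α}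
    (hab : a ≠ b) (hbc : b ≠ c) (hac : a ≠ c) :
    Equiv.swap a b * Equiv.swap b c * Equiv.swap a b =
      Equiv.swap b c * Equiv.swap a b * Equiv.swap b c := by
  ext x
  simp only [Equiv.Perm.mul_apply]
  by_cases hxa : x = a
  · subst hxa
    simp [Equiv.swap_apply_left, Equiv.swap_apply_right,
      Equiv.swap_apply_of_ne_of_ne, hab, hbc, hac, hab.symm, hbc.symm, hac.symm]
  by_cases hxb : x = b
  · subst hxb
    simp [Equiv.swap_apply_left, Equiv.swap_apply_right,
      Equiv.swap_apply_of_ne_of_ne, hab, hbc, hac, hab.symm, hbc.symm, hac.symm]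
  by_cases hxc : x = c
  · subst hxc
    simp [Equiv.swap_apply_left, Equiv.swap_apply_right,
      Equiv.swap_apply_of_ne_of_ne, hab, hbc, hac, hab.symm, hbc.symm, hac.symm]
  · simp [Equiv.swap_apply_of_ne_of_ne, hxa, hxb, hxc]

lemma braidRels_hold (n : ℕ) :
    ∀ r ∈ braidRels n, FreeGroup.lift (permGen n) r = 1 := by
  rintro r (⟨i, j, hij, rfl⟩ | ⟨i, j, hij, rfl⟩) <;>
    simp only [σrel1, σrel2, map_mul, map_inv, FreeGroup.lift_apply_of]
  · have hi := i.isLt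
    have hj := j.isLt
    have hcomm : Commute (permGen n i) (permGen n j) := by
      apply swap_commute_of <;> · simp only [ne_eq, Fin.mk.injEq]; omega
    have : permGen n i * permGen n j * (permGen n i)⁻¹ * (permGen n j)⁻¹ = 1 := by
      rw [hcomm.eq]; group
    exact this
  · have hi := i.isLt
    have hj := j.isLt
    have h2 : permGen n j =
        Equiv.swap ⟨(i : ℕ) + 1, by omega⟩ ⟨(i : ℕ) + 2, by omega⟩ := by
      unfold permGen
      congr 1 <;> · simp only [Fin.mk.injEq]; omega
    have h1 : permGen n i =
        Equiv.swap (⟨(i : ℕ), by omega⟩ : Fin n) ⟨(i : ℕ) + 1, by omega⟩ := rfl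
    rw [h1, h2, mul_inv_eq_one]
    apply swap_braid <;> · simp only [ne_eq, Fin.mk.injEq]; omega

/-- The canonical projection `σ : B_n → S_n` sending `σᵢ` to the
transposition `(i, i+1)`. -/
def braidπ (n : ℕ) : B n →* Equiv.Perm (Fin n) :=
  PresentedGroup.toGroup (braidRels_hold n)

/-- The pure braid group `P_n`, the kernel of `σ : B_n → S_n`. -/
def P (n : ℕ) : Subgroup (B n) := (braidπ n).ker

instance P_normal (n : ℕ) : (P n).Normal := MonoidHom.normal_ker _

/-- `Γ_k(P_n)`, the `k`-th term of the lower central series of the pure braid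
group (with `Γ_1(P_n) = P_n`), viewed as a subgroup of `B_n`. -/
def gammaB (n k : ℕ) : Subgroup (B n) :=
  ((⊤ : Subgroup (P n)).lowerCentralSeries (k - 1)).map (P n).subtype

instance gammaB_normal (n k : ℕ) : (gammaB n k).Normal := by
  constructor
  rintro x ⟨y, hy, rfl⟩ g
  let f : P n →* P n := (MulAut.conjNormal g).toMonoidHom
  have hmem : f y ∈ (⊤ : Subgroup (P n)).lowerCentralSeries (k - 1) :=
    Subgroup.lowerCentralSeries.map f (k - 1) (Subgroup.mem_map_of_mem f hy)
  refine ⟨f y, hmem, ?_⟩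
  simp [f, MulAut.conjNormal_apply]

lemma gammaB_le_P (n k : ℕ) : gammaB n k ≤ P n := Subgroup.map_subtype_le _

/-- The homomorphism `σ̄ : B_n/Γ_k(P_n) → S_n` induced by `σ`. -/
def braidπbar (n k : ℕ) : B n ⧸ gammaB n k →* Equiv.Perm (Fin n) :=
  QuotientGroup.lift _ (braidπ n)
    (fun x hx => MonoidHom.mem_ker.mp (gammaB_le_P n k hx))

/-- The word `σ_{j-1} ⋯ σ_{i+1}` (paper 1-based indices). -/
def braidChain (n i j : ℕ) : B n :=
  ((List.range (j - 1 - i)).map (fun t => braidGen n (j - 2 - t))).prod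

/-- The standard pure braid generator `A_{i,j} = σ_{j-1}⋯σ_{i+1} σ_i² σ_{i+1}⁻¹⋯σ_{j-1}⁻¹`
(paper 1-based indices, `1 ≤ i < j ≤ n`). -/
def braidA (n i j : ℕ) : B n :=
  braidChain n i j * (braidGen n (i - 1)) ^ 2 * (braidChain n i j)⁻¹

/-- `A_{i,j}` with the convention `A_{j,i} = A_{i,j}`. -/
def braidAsym (n i j : ℕ) : B n := if i ≤ j then braidA n i j else braidA n j i

end BraidProj

/-!
Forgetting the last `m - n` strands is a homomorphism `P_m → P_n` which is a left inverse of `ι`.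
Homomorphisms map `Γ_k` into `Γ_k`, so `ι⁻¹(Γ_k(P_m)) = Γ_k(P_n)`, which is the injectivity.

Forgetting strands is not defined on all of `B_m`, so it is built from the presentation: `B_m`
acts on the `n`-element sets `S` of strands, each labelled by the braid in `B_n` traced out by the
strands of `S`. Concretely, `σ_i` becomes the transposition `(i, i+1)` with label `σ_r` at those
`S` that contain both `i` and `i+1` as their `r`-th and `(r+1)`-st elements, and label `1` at the
others. The braid relations hold in this wreath product `B_n ≀ S_m`. A pure braid fixes
`S₀ = {1, …, n}`, and its label there is the forgotten braid. That label is again pure because the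
images of the labels in `S_n` depend only on the underlying permutation in `S_m`.
-/

open scoped Pointwise
open Equiv Finset
open Set (powersetCard)

lemma Equiv.Perm.viaEmbedding_swap {α β : Type*} [DecidableEq α] [DecidableEq β] (f : α ↪ β)
    (x y : α) : (swap x y).viaEmbedding f = swap (f x) (f y) := by
  ext z
  by_cases hz : z ∈ Set.range f
  · obtain ⟨w, rfl⟩ := hz
    rw [Perm.viaEmbedding_apply, f.injective.swap_apply]
  · rw [Perm.viaEmbedding_apply_of_notMem _ _ _ hz,
      swap_apply_of_ne_of_ne (fun h => hz ⟨x, h.symm⟩) (fun h => hz ⟨y, h.symm⟩)]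

lemma Finset.mem_perm_smul {α : Type*} [DecidableEq α] {p : Perm α} {s : Finset α} {x : α} :
    x ∈ p • s ↔ p⁻¹ x ∈ s := by
  rw [← inv_inv p, mem_inv_smul_finset_iff, inv_inv, Perm.smul_def]

lemma Equiv.swap_apply_lt_swap_apply {α : Type*} [LinearOrder α] {a b x y : α} (hab : a ⋖ b)
    (hxy : x < y) (h : ¬(x = a ∧ y = b)) : swap a b x < swap a b y := by
  have := hab.lt
  have h₁ : ∀ z, z < b → z ≤ a := fun z => hab.le_of_lt
  have h₂ : ∀ z, a < z → b ≤ z := fun z => hab.ge_of_gt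
  rw [swap_apply_def, swap_apply_def]
  split_ifs <;> grind [lt_of_lt_of_le, lt_of_le_of_lt, le_of_lt, lt_of_le_of_ne]

namespace BraidProj

section Relations

lemma braidGen_of {n a : ℕ} (h : a < n - 1) : braidGen n a = PresentedGroup.of ⟨a, h⟩ :=
  dif_pos h

lemma braidGen_commute (n : ℕ) {a b : ℕ} (h : a + 2 ≤ b) :
    Commute (braidGen n a) (braidGen n b) := by
  by_cases hb : b < n - 1
  · have ha : a < n - 1 := by omega
    have := PresentedGroup.one_of_mem (rels := braidRels n)
      (Or.inl ⟨⟨a, ha⟩, ⟨b, hb⟩, h, rfl⟩)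
    simp only [σrel1, map_mul, map_inv, mul_inv_eq_iff_eq_mul] at this
    rw [braidGen_of ha, braidGen_of hb]
    exact this
  · rw [show braidGen n b = 1 from dif_neg hb]
    exact Commute.one_right _

lemma braidGen_braid (n : ℕ) {a : ℕ} (h : a + 2 < n) :
    braidGen n a * braidGen n (a + 1) * braidGen n a =
      braidGen n (a + 1) * braidGen n a * braidGen n (a + 1) := by
  have := PresentedGroup.one_of_mem (rels := braidRels n)
    (Or.inr ⟨⟨a, by omega⟩, ⟨a + 1, by omega⟩, rfl, rfl⟩)
  simp only [σrel2, map_mul, map_inv, mul_inv_eq_one] at this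
  rw [braidGen_of (by omega : a < n - 1), braidGen_of (by omega : a + 1 < n - 1)]
  exact this

lemma braidπ_of (n : ℕ) (i : Fin (n - 1)) : braidπ n (PresentedGroup.of i) = permGen n i :=
  PresentedGroup.toGroup.of _

end Relations

section Rank

variable {α : Type*} [LinearOrder α] {S : Finset α} {a b : α}

def rank (S : Finset α) (a : α) : ℕ := #{x ∈ S | x < a}

lemma rank_lt_rank (ha : a ∈ S) (hab : a < b) : rank S a < rank S b := by
  refine card_lt_card ⟨fun x hx => ?_, fun h => by simpa using h (mem_filter.2 ⟨ha, hab⟩)⟩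
  rw [mem_filter] at hx ⊢
  exact ⟨hx.1, hx.2.trans hab⟩

lemma rank_lt_card (ha : a ∈ S) : rank S a < #S :=
  card_lt_card ⟨filter_subset _ _, fun h => by simpa using h ha⟩

lemma rank_of_covBy (hab : a ⋖ b) : rank S b = rank S a + if a ∈ S then 1 else 0 := by
  have : {x ∈ S | x < b} = {x ∈ S | x < a ∨ x = a} := by
    simp_rw [hab.lt_iff_le_left, le_iff_lt_or_eq]
  split_ifs with ha
  · rw [rank, this, filter_or, filter_eq', if_pos ha, union_comm, ← insert_eq,
      card_insert_of_notMem (by simp)]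
    rfl
  · rw [rank, this, filter_or, filter_eq', if_neg ha, union_empty]
    rfl

lemma rank_perm_smul (p : Perm α) (hp : ∀ x, p x < a ↔ x < a) :
    rank (p • S) a = rank S a := by
  rw [rank, rank, smul_finset_def, filter_image, card_image_of_injective _ (MulAction.injective p)]
  simp [hp]

lemma rank_swap_smul {u v : α} (h : u < a ↔ v < a) : rank (swap u v • S) a = rank S a := by
  refine rank_perm_smul _ fun x => ?_
  rcases eq_or_ne x u with rfl | hxu
  · rw [swap_apply_left, h]
  rcases eq_or_ne x v with rfl | hxv
  · rw [swap_apply_right, h]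
  rw [swap_apply_of_ne_of_ne hxu hxv]

end Rank

section Crossing

variable (n : ℕ) {Q : Type*} [Group Q]

abbrev SubsetWreath (α Q : Type*) [DecidableEq α] [Group Q] : Type _ :=
  (powersetCard α n → Q) ⋊[mulAutArrow] Perm α

lemma SubsetWreath.mul_left_apply {α : Type*} [DecidableEq α] {n : ℕ}
    (x y : SubsetWreath n α Q) (S : powersetCard α n) :
    (x * y).left S = x.left S * y.left (x.right⁻¹ • S) :=
  rfl

variable {α : Type*} [LinearOrder α]

/-- Seen from the strands in `S`, the crossing of the adjacent strands `a ⋖ b` is the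
`rank S a`-th generator if both strands lie in `S`, and no crossing at all otherwise. -/
def crossingLabel (g : ℕ → Q) (a b : α) (S : powersetCard α n) : Q :=
  if a ∈ (S : Finset α) ∧ b ∈ (S : Finset α) then g (rank (S : Finset α) a) else 1

def crossing (g : ℕ → Q) (a b : α) : SubsetWreath n α Q :=
  ⟨crossingLabel n g a b, swap a b⟩

variable {n} {g : ℕ → Q} {a b c d : α}

lemma crossing_commute (hab : a ⋖ b) (hcd : c ⋖ d) (hbc : b < c)
    (hg : ∀ r s, r + 2 ≤ s → Commute (g r) (g s)) :
    Commute (crossing n g a b) (crossing n g c d) := by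
  have hac := hab.lt.trans hbc
  have hbd := hbc.trans hcd.lt
  have had := hac.trans hcd.lt
  refine SemidirectProduct.ext (funext fun S => ?_) (swap_commute_of hac.ne had.ne hbc.ne hbd.ne)
  simp only [SubsetWreath.mul_left_apply, crossing, crossingLabel, swap_inv,
    Set.powersetCard.coe_smul, Finset.mem_perm_smul, swap_apply_of_ne_of_ne hac.ne' hbc.ne',
    swap_apply_of_ne_of_ne had.ne' hbd.ne', swap_apply_of_ne_of_ne hac.ne had.ne,
    swap_apply_of_ne_of_ne hbc.ne hbd.ne, rank_swap_smul (iff_of_true hac hbc),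
    rank_swap_smul (iff_of_false hac.not_gt had.not_gt)]
  split_ifs with h₁
  · exact hg _ _ (by have := rank_lt_rank h₁.1 hab.lt; have := rank_lt_rank h₁.2 hbc; omega)
  all_goals simp

lemma crossing_braid (hab : a ⋖ b) (hbc : b ⋖ c)
    (hg : ∀ r, r + 2 < n → g r * g (r + 1) * g r = g (r + 1) * g r * g (r + 1)) :
    crossing n g a b * crossing n g b c * crossing n g a b =
      crossing n g b c * crossing n g a b * crossing n g b c := by
  have hac := hab.lt.trans hbc.lt
  refine SemidirectProduct.ext (funext fun S => ?_) (swap_braid hab.ne hbc.ne hac.ne)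
  have hrank_b : ∀ T : Finset α, rank T b = rank T a + if a ∈ T then 1 else 0 :=
    fun _ => rank_of_covBy hab
  simp only [SubsetWreath.mul_left_apply, SemidirectProduct.mul_right, crossing, crossingLabel,
    mul_inv_rev, swap_inv, mul_smul, Set.powersetCard.coe_smul, Finset.mem_perm_smul,
    swap_apply_left, swap_apply_right, swap_apply_of_ne_of_ne hab.ne hac.ne,
    swap_apply_of_ne_of_ne hac.ne' hbc.ne', hrank_b,
    rank_swap_smul (iff_of_false (lt_irrefl a) hab.lt.not_gt),
    rank_swap_smul (iff_of_false hab.lt.not_gt hac.not_gt)]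
  by_cases ha : a ∈ (S : Finset α) <;> by_cases hb : b ∈ (S : Finset α) <;>
    by_cases hc : c ∈ (S : Finset α) <;> simp [ha, hb, hc]
  have := rank_lt_rank ha hab.lt
  have := rank_lt_rank hb hbc.lt
  have := rank_lt_card hc
  exact hg _ (by rw [Set.powersetCard.card_eq] at *; omega)

end Crossing

section Relabel

variable {α : Type*} [LinearOrder α] {n : ℕ}

def enum (S : powersetCard α n) : Fin n ↪o α :=
  (S : Finset α).orderEmbOfFin (Set.powersetCard.card_eq S)

lemma enum_mem (S : powersetCard α n) (t : Fin n) : enum S t ∈ (S : Finset α) :=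
  orderEmbOfFin_mem _ _ _

lemma rank_enum (S : powersetCard α n) (t : Fin n) : rank S (enum S t) = t := by
  have : {x ∈ (S : Finset α) | x < enum S t} = (Iio t).map (enum S).toEmbedding := by
    ext x
    simp only [mem_filter, mem_map, mem_Iio, RelEmbedding.coe_toEmbedding]
    constructor
    · rintro ⟨hx, hxt⟩
      obtain ⟨s, rfl⟩ : x ∈ Set.range (enum S) := by rwa [enum, range_orderEmbOfFin]
      exact ⟨s, (enum S).lt_iff_lt.1 hxt, rfl⟩
    · rintro ⟨s, hst, rfl⟩
      exact ⟨enum_mem S s, (enum S).lt_iff_lt.2 hst⟩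
  rw [rank, this, card_map, Fin.card_Iio]

lemma enum_eq_of_val_eq_rank {S : powersetCard α n} {a : α} {t : Fin n}
    (ha : a ∈ (S : Finset α)) (ht : (t : ℕ) = rank S a) : enum S t = a := by
  obtain ⟨s, rfl⟩ : a ∈ Set.range (enum S) := by rwa [enum, range_orderEmbOfFin]
  rw [rank_enum] at ht
  rw [Fin.ext ht]

lemma mem_inv_smul {p : Perm α} {S : powersetCard α n} {x : α} :
    x ∈ ((p⁻¹ • S : powersetCard α n) : Finset α) ↔ p x ∈ (S : Finset α) := by
  rw [Set.powersetCard.coe_smul, Finset.mem_perm_smul, inv_inv]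

def relabel (p : Perm α) (S : powersetCard α n) : Perm (Fin n) :=
  (Set.powersetCard.orderIsoOfFin (p⁻¹ • S)).toEquiv.trans <|
    (p.subtypeEquiv fun _ => mem_inv_smul).trans (Set.powersetCard.orderIsoOfFin S).symm.toEquiv

lemma enum_relabel (p : Perm α) (S : powersetCard α n) (t : Fin n) :
    enum S (relabel p S t) = p (enum (p⁻¹ • S) t) := by
  change ((Set.powersetCard.orderIsoOfFin S) ((Set.powersetCard.orderIsoOfFin S).symm _) : α) = _
  rw [OrderIso.apply_symm_apply]
  rfl

lemma relabel_mul (p q : Perm α) (S : powersetCard α n) :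
    relabel (p * q) S = relabel p S * relabel q (p⁻¹ • S) := by
  ext t : 1
  apply (enum S).injective
  rw [Perm.mul_apply, enum_relabel, enum_relabel, enum_relabel, mul_inv_rev, mul_smul,
    Perm.mul_apply]

lemma relabel_one (S : powersetCard α n) : relabel 1 S = 1 := by
  ext t : 1
  apply (enum S).injective
  rw [enum_relabel, inv_one, one_smul, Perm.one_apply, Perm.one_apply]

lemma swap_smul_eq_self {S : powersetCard α n} {a b : α} (ha : a ∈ (S : Finset α))
    (hb : b ∈ (S : Finset α)) : swap a b • S = S := by
  refine Subtype.ext (Finset.ext fun x => ?_)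
  rw [Set.powersetCard.coe_smul, Finset.mem_perm_smul, swap_inv]
  rcases eq_or_ne x a with rfl | hxa
  · rw [swap_apply_left]; exact iff_of_true hb ha
  rcases eq_or_ne x b with rfl | hxb
  · rw [swap_apply_right]; exact iff_of_true ha hb
  rw [swap_apply_of_ne_of_ne hxa hxb]

lemma relabel_swap_of_mem {S : powersetCard α n} {a b : α} (hab : a ⋖ b)
    (ha : a ∈ (S : Finset α)) (hb : b ∈ (S : Finset α)) (hr : rank S a + 1 < n) :
    relabel (swap a b) S = swap ⟨rank S a, by omega⟩ ⟨rank S a + 1, hr⟩ := by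
  have hea := enum_eq_of_val_eq_rank (t := ⟨rank S a, by omega⟩) ha rfl
  have heb := enum_eq_of_val_eq_rank (t := ⟨rank S a + 1, hr⟩) hb
    (by rw [rank_of_covBy hab, if_pos ha])
  ext t : 1
  apply (enum S).injective
  rw [enum_relabel, swap_inv, swap_smul_eq_self ha hb, ← (enum S).injective.swap_apply, hea, heb]

lemma relabel_swap_of_not_mem {S : powersetCard α n} {a b : α} (hab : a ⋖ b)
    (h : ¬(a ∈ (S : Finset α) ∧ b ∈ (S : Finset α))) : relabel (swap a b) S = 1 := by
  set T := (swap a b)⁻¹ • S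
  have hT : ∀ x, x ∈ (T : Finset α) ↔ swap a b x ∈ (S : Finset α) := fun _ => mem_inv_smul
  have hmono : StrictMono fun t => swap a b (enum T t) := by
    refine fun t u htu => Equiv.swap_apply_lt_swap_apply hab ((enum T).strictMono htu) ?_
    rintro ⟨hta, hub⟩
    exact h ⟨by simpa [hub] using (hT _).1 (enum_mem T u),
      by simpa [hta] using (hT _).1 (enum_mem T t)⟩
  have := orderEmbOfFin_unique (Set.powersetCard.card_eq S) (fun t => (hT _).1 (enum_mem T t)) hmono
  ext t : 1
  apply (enum S).injective
  rw [enum_relabel, Perm.one_apply]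
  exact congrFun this t

lemma braidπ_crossingLabel {a b : α} (hab : a ⋖ b) (S : powersetCard α n) :
    braidπ n (crossingLabel n (braidGen n) a b S) = relabel (swap a b) S := by
  unfold crossingLabel
  split_ifs with h
  · have hr : rank S a + 1 < n := by
      have := rank_lt_rank h.1 hab.lt
      have := rank_lt_card h.2
      rw [Set.powersetCard.card_eq] at this
      omega
    rw [braidGen_of (by omega), braidπ_of, relabel_swap_of_mem hab h.1 h.2 hr]
    rfl
  · rw [map_one, relabel_swap_of_not_mem hab h]

def relabelHom : Perm α →* SubsetWreath n α (Perm (Fin n)) where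
  toFun p := ⟨relabel p, p⟩
  map_one' := SemidirectProduct.ext (funext relabel_one) rfl
  map_mul' p q := SemidirectProduct.ext (funext fun S => relabel_mul p q S) rfl

end Relabel

section Inclusion

variable {n m : ℕ}

def braidInclusion (hnm : n ≤ m) : B n →* B m :=
  PresentedGroup.toGroup (f := fun i : Fin (n - 1) => braidGen m i) <| by
    rintro r (⟨i, j, hij, rfl⟩ | ⟨i, j, hij, rfl⟩) <;>
      simp only [σrel1, σrel2, map_mul, map_inv, FreeGroup.lift_apply_of, mul_inv_eq_one]
    · exact mul_inv_eq_of_eq_mul (braidGen_commute m hij).eq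
    · rw [← hij]
      exact braidGen_braid m (by have := j.isLt; omega)

lemma braidInclusion_of (hnm : n ≤ m) (i : Fin (n - 1)) :
    braidInclusion hnm (PresentedGroup.of i) = braidGen m i :=
  PresentedGroup.toGroup.of _

lemma braidInclusion_braidGen (hnm : n ≤ m) {i : ℕ} (hi : i < n - 1) :
    braidInclusion hnm (braidGen n i) = braidGen m i := by
  rw [braidGen_of hi, braidInclusion_of]

lemma braidπ_comp_braidInclusion (hnm : n ≤ m) :
    (braidπ m).comp (braidInclusion hnm) =
      (Perm.viaEmbeddingHom (Fin.castLEEmb hnm)).comp (braidπ n) := by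
  refine PresentedGroup.ext fun i => ?_
  have hi : (i : ℕ) < m - 1 := by omega
  simp only [MonoidHom.comp_apply, braidInclusion_of, braidGen_of hi, braidπ_of,
    Perm.viaEmbeddingHom_apply, permGen, Equiv.Perm.viaEmbedding_swap]
  rfl

lemma braidInclusion_mem_P (hnm : n ≤ m) {x : B n} (hx : x ∈ P n) :
    braidInclusion hnm x ∈ P m := by
  change braidπ m (braidInclusion hnm x) = 1
  rw [← MonoidHom.comp_apply, braidπ_comp_braidInclusion, MonoidHom.comp_apply, hx, map_one]

lemma gammaB_eq_lowerCentralSeries (n k : ℕ) : gammaB n k = (P n).lowerCentralSeries (k - 1) :=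
  Subgroup.top_subtype_lowerCentralSeries _ _

lemma gammaB_le_comap_braidInclusion (hnm : n ≤ m) (k : ℕ) :
    gammaB n k ≤ (gammaB m k).comap (braidInclusion hnm) := by
  rw [← Subgroup.map_le_iff_le_comap, gammaB_eq_lowerCentralSeries, gammaB_eq_lowerCentralSeries,
    Subgroup.map_lowerCentralSeries]
  exact Subgroup.lowerCentralSeries_mono _
    (Subgroup.map_le_iff_le_comap.2 fun _ => braidInclusion_mem_P hnm)

end Inclusion

section EvalAtFixedPoint

variable {G A Q : Type*} [Group G] [MulAction G A] [Group Q]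

def evalAtFixedPoint (x : A) :
    (MulAction.stabilizer G x).comap
        (SemidirectProduct.rightHom (φ := mulAutArrow (A := A) (M := Q))) →* Q where
  toFun w := w.1.left x
  map_one' := rfl
  map_mul' w₁ w₂ := by
    have hx : w₁.1.right⁻¹ • x = x := inv_smul_eq_iff.2 w₁.2.symm
    change w₁.1.left x * w₂.1.left (w₁.1.right⁻¹ • x) = _
    rw [hx]

end EvalAtFixedPoint

section ForgetStrands

variable (n m : ℕ)

lemma fin_covBy_succ {i : ℕ} (h : i + 1 < m) : (⟨i, by omega⟩ : Fin m) ⋖ ⟨i + 1, h⟩ :=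
  Fin.covBy_iff.2 (Nat.covBy_iff_add_one_eq.2 rfl)

def subbraidGen (i : Fin (m - 1)) : SubsetWreath n (Fin m) (B n) :=
  crossing n (braidGen n) ⟨i, by have := i.isLt; omega⟩ ⟨i + 1, by have := i.isLt; omega⟩

def subbraidRep : B m →* SubsetWreath n (Fin m) (B n) :=
  PresentedGroup.toGroup (f := subbraidGen n m) <| by
    rintro r (⟨i, j, hij, rfl⟩ | ⟨⟨i, hi⟩, ⟨j, hj⟩, hij, rfl⟩) <;>
      simp only [σrel1, σrel2, map_mul, map_inv, FreeGroup.lift_apply_of, mul_inv_eq_one]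
    · have := j.isLt
      exact mul_inv_eq_of_eq_mul (crossing_commute (fin_covBy_succ m _) (fin_covBy_succ m _)
        (Fin.mk_lt_mk.2 (by omega)) fun _ _ h => braidGen_commute n h).eq
    · dsimp only at hij
      subst hij
      exact crossing_braid (fin_covBy_succ m _) (fin_covBy_succ m _) fun _ h => braidGen_braid n h

lemma subbraidRep_of (i : Fin (m - 1)) :
    subbraidRep n m (PresentedGroup.of i) = subbraidGen n m i :=
  PresentedGroup.toGroup.of _

lemma subbraidRep_right (y : B m) : (subbraidRep n m y).right = braidπ m y := by
  change (SemidirectProduct.rightHom.comp (subbraidRep n m)) y = _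
  congr 1
  exact PresentedGroup.ext fun i => by
    rw [MonoidHom.comp_apply, subbraidRep_of, braidπ_of]
    rfl

def braidπLabels : SubsetWreath n (Fin m) (B n) →* SubsetWreath n (Fin m) (Perm (Fin n)) :=
  SemidirectProduct.map (MonoidHom.compLeft (braidπ n) _) (MonoidHom.id _) fun _ => rfl

lemma braidπLabels_comp_subbraidRep :
    (braidπLabels n m).comp (subbraidRep n m) = relabelHom.comp (braidπ m) :=
  PresentedGroup.ext fun i => by
    rw [MonoidHom.comp_apply, MonoidHom.comp_apply, subbraidRep_of, braidπ_of]
    exact SemidirectProduct.ext (funext fun S => braidπ_crossingLabel (fin_covBy_succ m _) S) rfl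

variable {n m}

def basepoint (hnm : n ≤ m) : powersetCard (Fin m) n :=
  Set.powersetCard.ofFinEmb n (Fin m) (Fin.castLEEmb hnm)

lemma mem_basepoint (hnm : n ≤ m) {x : Fin m} (hx : (x : ℕ) < n) :
    x ∈ (basepoint hnm : Finset (Fin m)) := by
  simpa [basepoint] using ⟨⟨x, hx⟩, rfl⟩

lemma enum_basepoint (hnm : n ≤ m) : enum (basepoint hnm) = Fin.castLEOrderEmb hnm :=
  (orderEmbOfFin_unique' _ fun t => mem_basepoint hnm t.isLt).symm

lemma rank_basepoint (hnm : n ≤ m) {x : Fin m} (hx : (x : ℕ) < n) :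
    rank (basepoint hnm) x = x := by
  have := rank_enum (basepoint hnm) ⟨x, hx⟩
  rwa [enum_basepoint] at this

def basepointStabilizer (hnm : n ≤ m) : Subgroup (SubsetWreath n (Fin m) (B n)) :=
  (MulAction.stabilizer (Perm (Fin m)) (basepoint hnm)).comap SemidirectProduct.rightHom

lemma subbraidRep_mem_basepointStabilizer (hnm : n ≤ m) {y : B m} (hy : y ∈ P m) :
    subbraidRep n m y ∈ basepointStabilizer hnm := by
  change (subbraidRep n m y).right • basepoint hnm = basepoint hnm
  rw [subbraidRep_right, show braidπ m y = 1 from hy, one_smul]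

lemma subbraidRep_left_mem_P (hnm : n ≤ m) {y : B m} (hy : y ∈ P m) :
    (subbraidRep n m y).left (basepoint hnm) ∈ P n := by
  change ((braidπLabels n m).comp (subbraidRep n m) y).left (basepoint hnm) = 1
  rw [braidπLabels_comp_subbraidRep, MonoidHom.comp_apply, show braidπ m y = 1 from hy, map_one]
  rfl

def forgetStrands (hnm : n ≤ m) : P m →* P n :=
  ((evalAtFixedPoint (basepoint hnm)).comp
      (((subbraidRep n m).comp (P m).subtype).codRestrict (basepointStabilizer hnm)
        fun y => subbraidRep_mem_basepointStabilizer hnm y.2)).codRestrict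
    (P n) fun y => subbraidRep_left_mem_P hnm y.2

lemma coe_forgetStrands (hnm : n ≤ m) (y : P m) :
    (forgetStrands hnm y : B n) = (subbraidRep n m y).left (basepoint hnm) := rfl

lemma subbraidRep_braidInclusion_mem (hnm : n ≤ m) (x : B n) :
    subbraidRep n m (braidInclusion hnm x) ∈ basepointStabilizer hnm := by
  refine PresentedGroup.generated_by _
    ((basepointStabilizer hnm).comap ((subbraidRep n m).comp (braidInclusion hnm))) (fun j => ?_) x
  have hj : (j : ℕ) < m - 1 := by omega
  change (subbraidRep n m (braidInclusion hnm (.of j))).right • basepoint hnm = basepoint hnm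
  rw [braidInclusion_of, braidGen_of hj, subbraidRep_of]
  exact swap_smul_eq_self (mem_basepoint hnm (by dsimp; omega))
    (mem_basepoint hnm (by dsimp; omega))

lemma subbraidRep_braidInclusion_left (hnm : n ≤ m) (x : B n) :
    (subbraidRep n m (braidInclusion hnm x)).left (basepoint hnm) = x := by
  let R : B n →* basepointStabilizer hnm :=
    ((subbraidRep n m).comp (braidInclusion hnm)).codRestrict _ (subbraidRep_braidInclusion_mem hnm)
  suffices (evalAtFixedPoint (basepoint hnm)).comp R = MonoidHom.id _ from
    DFunLike.congr_fun this x
  refine PresentedGroup.ext fun j => ?_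
  have hj : (j : ℕ) < m - 1 := by omega
  change (subbraidRep n m (braidInclusion hnm (.of j))).left (basepoint hnm) = .of j
  rw [braidInclusion_of, braidGen_of hj, subbraidRep_of]
  simp only [subbraidGen, crossing, crossingLabel]
  rw [if_pos ⟨mem_basepoint hnm (by dsimp; omega), mem_basepoint hnm (by dsimp; omega)⟩,
    rank_basepoint hnm (by dsimp; omega), braidGen_of j.isLt]

lemma comap_braidInclusion_gammaB (hnm : n ≤ m) (k : ℕ) :
    (gammaB m k).comap (braidInclusion hnm) = gammaB n k := by
  refine le_antisymm (fun x ⟨y, hy, hyx⟩ => ⟨forgetStrands hnm y, ?_, ?_⟩)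
    (gammaB_le_comap_braidInclusion hnm k)
  · have := Subgroup.mem_map_of_mem (forgetStrands hnm) hy
    rw [Subgroup.map_lowerCentralSeries] at this
    exact Subgroup.lowerCentralSeries_mono _ le_top this
  · rw [Subgroup.subtype_apply] at hyx
    rw [Subgroup.subtype_apply, coe_forgetStrands, hyx, subbraidRep_braidInclusion_left]

end ForgetStrands

end BraidProj

open BraidProj in
theorem inclusion_induces_injective_general (k : ℕ) (n m : ℕ) (hnm : n ≤ m) :
    ∃ ι : B n →* B m,
      (∀ i : ℕ, i < n - 1 → ι (braidGen n i) = braidGen m i) ∧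
      ∃ h : gammaB n k ≤ (gammaB m k).comap ι,
        Function.Injective (QuotientGroup.map (gammaB n k) (gammaB m k) ι h) := by
  refine ⟨braidInclusion hnm, fun i hi => braidInclusion_braidGen hnm hi,
    gammaB_le_comap_braidInclusion hnm k, ?_⟩
  rw [← MonoidHom.ker_eq_bot_iff, QuotientGroup.ker_map, comap_braidInclusion_gammaB,
    QuotientGroup.map_mk'_self]

open BraidProj in
/-- For `k ≥ 1` and `2 ≤ n ≤ m`, the homomorphism `ι : B_n → B_m` defined by
`ι(σ_i) = σ_i` maps `Γ_k(P_n)` into `Γ_k(P_m)`, and the induced homomorphism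
`B_n/Γ_k(P_n) → B_m/Γ_k(P_m)` is injective. -/
theorem inclusion_induces_injective (k : ℕ) (hk : 1 ≤ k) (n m : ℕ)
    (hn : 2 ≤ n) (hnm : n ≤ m) :
    ∃ ι : B n →* B m,
      (∀ i : ℕ, i < n - 1 → ι (braidGen n i) = braidGen m i) ∧
      ∃ h : gammaB n k ≤ (gammaB m k).comap ι,
        Function.Injective (QuotientGroup.map (gammaB n k) (gammaB m k) ι h) :=
  inclusion_induces_injective_general k n m hnm
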